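/- For any r>1 and α>0, the set {x∈(0,1]: lim_{n→∞} L_n(x)/n^r = α} has Hausdorff dimension 0; likewise for r=1 the set {x∈(0,1]: lim_{n→∞} L_n(x)/n = α} has Hausdorff dimension 0. -/

import Mathlib

open MeasureTheory Filter Set Real

/-- First digit of the power-2-decaying Gauss-like expansion:
`⌈y⌉` in the paper denotes the smallest integer strictly larger than `y`. -/
noncomputable def p2dD1 (x : ℝ) : ℕ := (⌊-Real.logb 2 x⌋ + 1).toNat

/-- The Gauss-like map `T x = 2^n x - 1` on `(1/2^n, 1/2^(n-1)]`. -/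
noncomputable def p2dT (x : ℝ) : ℝ := 2 ^ p2dD1 x * x - 1

/-- `n`-th digit (`n ≥ 1`) of the P2DGL expansion. -/
noncomputable def p2dDigit (n : ℕ) (x : ℝ) : ℕ := p2dD1 (p2dT^[n-1] x)

/-- Maximal digit among the first `n` digits. -/
noncomputable def p2dL (n : ℕ) (x : ℝ) : ℕ :=
  Finset.sup (Finset.Icc 1 n) (fun i => p2dDigit i x)

/-!
On the level set the digit sum `Sₙ = d₁ + ⋯ + dₙ` grows faster than any linear function.
For `r > 1` this is immediate from `Sₙ ≥ Lₙ ≈ α nʳ`. For `r = 1`, the largest of the first `n`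
digits, of size `≈ α n`, sits at an index `i > θ n` with `θ` close to `1`, so
`Sₙ ≥ S_{i-1} + (α - ε) n`; iterating gives `Sₙ ≳ (α - ε) n / (1 - θ)`, and `1 / (1 - θ)` is
arbitrarily large.

A rank-`n` cylinder with digit sum `S` has diameter at most `2⁻ˢ`, and `2^{-sS} ≤ 2^{-s(Kn + S)/2}`
when `S ≥ K n`. So covering the points with `Sₙ ≥ K n` by such cylinders costs, in
`s`-dimensional measure, at most `∑_{d₁,…,dₙ} 2^{-s(Kn + ∑ dᵢ)/2} = (2^{-sK/2} / (1 - 2^{-s/2}))ⁿ`,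
which tends to `0` once `K` is large. Hence every `s`-dimensional Hausdorff measure of the level set vanishes.
-/

open Metric
open scoped ENNReal Topology

lemma two_pow_p2dD1_mul_mem_Ioc {x : ℝ} (hx : x ∈ Ioc (0:ℝ) 1) :
    2 ^ p2dD1 x * x ∈ Ioc (1:ℝ) 2 := by
  have hfloor : 0 ≤ ⌊-logb 2 x⌋ :=
    Int.floor_nonneg.2 (neg_nonneg.2 (logb_nonpos one_lt_two hx.1.le hx.2))
  have hd : (p2dD1 x : ℝ) = ⌊-logb 2 x⌋ + 1 := by
    rw [p2dD1, ← Int.cast_natCast, Int.toNat_of_nonneg (by omega)]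
    push_cast; ring
  have hrepr : 2 ^ p2dD1 x * x = (2:ℝ) ^ ((p2dD1 x : ℝ) + logb 2 x) := by
    rw [rpow_add two_pos, rpow_natCast, rpow_logb two_pos (by norm_num) hx.1]
  rw [hrepr]
  constructor
  · exact one_lt_rpow one_lt_two (by rw [hd]; linarith [Int.lt_floor_add_one (-logb 2 x)])
  · calc (2:ℝ) ^ ((p2dD1 x : ℝ) + logb 2 x) ≤ 2 ^ (1:ℝ) :=
          rpow_le_rpow_of_exponent_le one_le_two (by rw [hd]; linarith [Int.floor_le (-logb 2 x)])
      _ = 2 := rpow_one 2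

lemma mapsTo_p2dT : MapsTo p2dT (Ioc 0 1) (Ioc 0 1) := fun x hx => by
  obtain ⟨h1, h2⟩ := two_pow_p2dD1_mul_mem_Ioc hx
  exact ⟨by rw [p2dT]; linarith, by rw [p2dT]; linarith⟩

noncomputable def p2dDigitSum (n : ℕ) (x : ℝ) : ℕ :=
  ∑ i ∈ Finset.range n, p2dD1 (p2dT^[i] x)

lemma p2dDigitSum_succ (n : ℕ) (x : ℝ) :
    p2dDigitSum (n + 1) x = p2dDigitSum n x + p2dDigit (n + 1) x :=
  Finset.sum_range_succ _ _

lemma p2dDigitSum_succ' (n : ℕ) (x : ℝ) :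
    p2dDigitSum (n + 1) x = p2dD1 x + p2dDigitSum n (p2dT x) := by
  rw [p2dDigitSum, Finset.sum_range_succ', add_comm]
  rfl

lemma p2dDigitSum_mono (x : ℝ) : Monotone (p2dDigitSum · x) := fun _ _ h =>
  Finset.sum_le_sum_of_subset (Finset.range_subset_range.2 h)

lemma p2dDigit_le_p2dL {i n : ℕ} (hi : i ∈ Finset.Icc 1 n) (x : ℝ) :
    p2dDigit i x ≤ p2dL n x :=
  Finset.le_sup (f := (p2dDigit · x)) hi

lemma exists_p2dDigit_eq_p2dL {n : ℕ} (hn : 1 ≤ n) (x : ℝ) :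
    ∃ i ∈ Finset.Icc 1 n, p2dDigit i x = p2dL n x := by
  obtain ⟨i, hi, h⟩ := Finset.exists_mem_eq_sup _ (Finset.nonempty_Icc.2 hn) (p2dDigit · x)
  exact ⟨i, hi, h.symm⟩

lemma p2dDigitSum_pred_add_p2dDigit_le {i n : ℕ} (hi : i ∈ Finset.Icc 1 n) (x : ℝ) :
    p2dDigitSum (i - 1) x + p2dDigit i x ≤ p2dDigitSum n x := by
  obtain ⟨hi1, hin⟩ := Finset.mem_Icc.1 hi
  obtain ⟨j, rfl⟩ : ∃ j, i = j + 1 := ⟨i - 1, by omega⟩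
  rw [Nat.add_sub_cancel, ← p2dDigitSum_succ]
  exact p2dDigitSum_mono x hin

lemma p2dL_le_p2dDigitSum (n : ℕ) (x : ℝ) : p2dL n x ≤ p2dDigitSum n x :=
  Finset.sup_le fun _ hi => (Nat.le_add_left _ _).trans (p2dDigitSum_pred_add_p2dDigit_le hi x)

lemma abs_sub_le_of_p2dD1_iterate_eq (n : ℕ) {x y : ℝ} (hx : x ∈ Ioc (0:ℝ) 1)
    (hy : y ∈ Ioc (0:ℝ) 1) (h : ∀ i < n, p2dD1 (p2dT^[i] x) = p2dD1 (p2dT^[i] y)) :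
    |x - y| ≤ 2⁻¹ ^ p2dDigitSum n x := by
  induction n generalizing x y with
  | zero =>
    rw [p2dDigitSum, Finset.sum_range_zero, pow_zero, abs_sub_le_iff]
    constructor <;> linarith [hx.1, hx.2, hy.1, hy.2]
  | succ n ih =>
    have hd : p2dD1 x = p2dD1 y := h 0 n.succ_pos
    have hT := ih (mapsTo_p2dT hx) (mapsTo_p2dT hy) fun i hi => h (i + 1) (by omega)
    have hxy : x - y = 2⁻¹ ^ p2dD1 x * (p2dT x - p2dT y) := by
      rw [p2dT, p2dT, ← hd, inv_pow]
      field_simp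
      ring
    rw [hxy, abs_mul, abs_of_pos (by positivity), p2dDigitSum_succ', pow_add]
    gcongr

-- Summing the gains `c n + c θ n + c θ² n + ⋯` along the chain of steps back from `n`.
lemma exists_linear_lower_bound_of_eventually_gain {f : ℕ → ℝ} (hf : ∀ n, 0 ≤ f n)
    {c θ B : ℝ} (hB : 0 ≤ B) (hBc : B * (1 - θ) < c)
    (hgain : ∀ᶠ n : ℕ in atTop, ∃ m < n, θ * n - 1 ≤ m ∧ f m + c * n ≤ f n) :
    ∃ D : ℝ, ∀ n, B * n - D ≤ f n := by
  obtain ⟨N₁, hN₁⟩ := eventually_atTop.1 hgain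
  set δ := c - B * (1 - θ)
  have hδ : 0 < δ := by linarith
  obtain ⟨N₂, hN₂⟩ := exists_nat_ge (B / δ)
  rw [div_le_iff₀ hδ] at hN₂
  refine ⟨B * max N₁ N₂, fun n => ?_⟩
  induction n using Nat.strong_induction_on with
  | _ n ih =>
    rcases lt_or_ge n (max N₁ N₂) with hn | hn
    · have : B * n ≤ B * max N₁ N₂ := by gcongr
      linarith [hf n]
    · obtain ⟨m, hmn, hθm, hfm⟩ := hN₁ n (le_of_max_le_left hn)
      have hN₂n : (N₂ : ℝ) ≤ n := by exact_mod_cast le_of_max_le_right hn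
      have h1 : B ≤ n * δ := hN₂.trans (by gcongr)
      have h2 : B * (θ * n - 1) ≤ B * m := by gcongr
      nlinarith [ih m hmn]

lemma eventually_mul_lt_and_lt_mul_of_tendsto_div {u : ℕ → ℝ} {α a b : ℝ}
    (h : Tendsto (fun n : ℕ => u n / n) atTop (𝓝 α)) (ha : a < α) (hb : α < b) :
    ∀ᶠ n : ℕ in atTop, a * n < u n ∧ u n < b * n := by
  filter_upwards [h (Ioo_mem_nhds ha hb), eventually_gt_atTop 0] with n hn hn₀
  have hn₀' : (0 : ℝ) < n := by exact_mod_cast hn₀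
  exact ⟨(lt_div_iff₀ hn₀').1 hn.1, (div_lt_iff₀ hn₀').1 hn.2⟩

-- The maximal digit among the first `n` is `> a n`, so its index `i` satisfies `a n < L_i < b i`.
lemma eventually_exists_p2dDigitSum_gain {x a b : ℝ} (ha : 0 < a)
    (hband : ∀ᶠ k : ℕ in atTop, a * k < p2dL k x ∧ (p2dL k x : ℝ) < b * k) :
    ∀ᶠ n : ℕ in atTop, ∃ m < n, a / b * n - 1 ≤ m ∧
      (p2dDigitSum m x : ℝ) + a * n ≤ p2dDigitSum n x := by
  obtain ⟨N₀, hN₀⟩ := eventually_atTop.1 hband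
  have hlarge : ∀ᶠ n : ℕ in atTop, (p2dL N₀ x : ℝ) < a * n :=
    (tendsto_natCast_atTop_atTop.const_mul_atTop ha).eventually_gt_atTop _
  filter_upwards [hlarge, eventually_ge_atTop N₀, eventually_gt_atTop 0] with n hn hN₀n hn₀
  obtain ⟨i, hi, hiL⟩ := exists_p2dDigit_eq_p2dL hn₀ x
  obtain ⟨hi₁, hin⟩ := Finset.mem_Icc.1 hi
  have hdi : a * n < p2dDigit i x := hiL ▸ (hN₀ n hN₀n).1
  have hN₀i : N₀ ≤ i := by
    by_contra! hiN₀
    have : (p2dDigit i x : ℝ) ≤ p2dL N₀ x := by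
      exact_mod_cast p2dDigit_le_p2dL (Finset.mem_Icc.2 ⟨hi₁, hiN₀.le⟩) x
    linarith
  obtain ⟨hai, hbi⟩ := hN₀ i hN₀i
  have hLi : (p2dDigit i x : ℝ) ≤ p2dL i x := by
    exact_mod_cast p2dDigit_le_p2dL (Finset.mem_Icc.2 ⟨hi₁, le_rfl⟩) x
  have hi₀ : (0 : ℝ) < i := by exact_mod_cast hi₁
  have hb : 0 < b := by nlinarith
  refine ⟨i - 1, by omega, ?_, ?_⟩
  · have : a * n / b < i := by
      rw [div_lt_iff₀ hb]
      linarith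
    rw [Nat.cast_sub hi₁, div_mul_eq_mul_div, Nat.cast_one]
    linarith
  · have := p2dDigitSum_pred_add_p2dDigit_le hi x
    have : (p2dDigitSum (i - 1) x : ℝ) + p2dDigit i x ≤ p2dDigitSum n x := by exact_mod_cast this
    linarith

lemma eventually_mul_le_p2dDigitSum_of_tendsto_div {x α : ℝ} (hα : 0 < α)
    (hlim : Tendsto (fun n : ℕ => (p2dL n x : ℝ) / n) atTop (𝓝 α)) (K : ℝ) :
    ∀ᶠ n : ℕ in atTop, K * n ≤ p2dDigitSum n x := by
  -- For the band `α ± δ` the slope `(α - δ) / (1 - θ)` reached below is `(α² - δ²) / (2δ) > B`.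
  set B := max K 0 + 1
  have hB : 1 ≤ B := by simp [B]
  set δ := min (α / 2) (α ^ 2 / (4 * B))
  have hδ : 0 < δ := by positivity
  have hδα : δ ≤ α / 2 := min_le_left _ _
  have hδB : B * δ ≤ α ^ 2 / 4 :=
    calc B * δ ≤ B * (α ^ 2 / (4 * B)) := by gcongr; exact min_le_right _ _
      _ = α ^ 2 / 4 := by field_simp
  have hBc : B * (1 - (α - δ) / (α + δ)) < α - δ := by
    rw [one_sub_div (by linarith), mul_div_assoc', div_lt_iff₀ (by linarith)]
    nlinarith
  obtain ⟨D, hD⟩ := exists_linear_lower_bound_of_eventually_gain (fun n => Nat.cast_nonneg _)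
    (by linarith) hBc (eventually_exists_p2dDigitSum_gain (by linarith)
      (eventually_mul_lt_and_lt_mul_of_tendsto_div hlim (by linarith) (by linarith)))
  filter_upwards [tendsto_natCast_atTop_atTop.eventually_ge_atTop D] with n hn
  nlinarith [hD n, le_max_left K 0, (Nat.cast_nonneg n : (0 : ℝ) ≤ n)]

lemma tendsto_p2dL_div_atTop {x r α : ℝ} (hr : 1 < r) (hα : 0 < α)
    (hlim : Tendsto (fun n : ℕ => (p2dL n x : ℝ) / (n : ℝ) ^ r) atTop (𝓝 α)) :
    Tendsto (fun n : ℕ => (p2dL n x : ℝ) / n) atTop atTop := by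
  refine (hlim.pos_mul_atTop hα ((tendsto_rpow_atTop (sub_pos.2 hr)).comp
    tendsto_natCast_atTop_atTop)).congr' ?_
  filter_upwards [eventually_gt_atTop 0] with n hn
  have hn' : (n : ℝ) ≠ 0 := by positivity
  simp only [Function.comp_apply, rpow_sub_one hn']
  field_simp

lemma eventually_mul_le_p2dDigitSum {x r α : ℝ} (hr : 1 ≤ r) (hα : 0 < α)
    (hlim : Tendsto (fun n : ℕ => (p2dL n x : ℝ) / (n : ℝ) ^ r) atTop (𝓝 α)) (K : ℝ) :
    ∀ᶠ n : ℕ in atTop, K * n ≤ p2dDigitSum n x := by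
  rcases hr.eq_or_lt with rfl | hr
  · simp only [rpow_one] at hlim
    exact eventually_mul_le_p2dDigitSum_of_tendsto_div hα hlim K
  · filter_upwards [(tendsto_p2dL_div_atTop hr hα hlim).eventually_ge_atTop K,
      eventually_gt_atTop 0] with n hK hn
    have hLS : (p2dL n x : ℝ) ≤ p2dDigitSum n x := by exact_mod_cast p2dL_le_p2dDigitSum n x
    have hn' : (0 : ℝ) < n := by exact_mod_cast hn
    rw [le_div_iff₀ hn'] at hK
    linarith

lemma ENNReal.tsum_pi_fin_prod_eq_pow {α : Type*} (g : α → ℝ≥0∞) (n : ℕ) :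
    ∑' f : Fin n → α, ∏ i, g (f i) = (∑' a, g a) ^ n := by
  induction n with
  | zero => simp
  | succ n ih =>
    rw [← (Fin.consEquiv fun _ : Fin (n + 1) => α).tsum_eq, ENNReal.tsum_prod', pow_succ',
      ← ih, ← ENNReal.tsum_mul_right]
    refine tsum_congr fun a => ?_
    rw [← ENNReal.tsum_mul_left]
    refine tsum_congr fun f => ?_
    simp [Fin.consEquiv, Fin.prod_univ_succ]

def p2dCylinder (n : ℕ) (f : Fin n → ℕ) : Set ℝ :=
  {y | y ∈ Ioc 0 1 ∧ ∀ i : Fin n, p2dD1 (p2dT^[i] y) = f i}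

lemma p2dDigitSum_eq_of_mem_p2dCylinder {n : ℕ} {f : Fin n → ℕ} {y : ℝ}
    (hy : y ∈ p2dCylinder n f) : p2dDigitSum n y = ∑ i, f i := by
  rw [p2dDigitSum, Finset.sum_range]
  exact Finset.sum_congr rfl fun i _ => hy.2 i

lemma ediam_p2dCylinder_le (n : ℕ) (f : Fin n → ℕ) :
    ediam (p2dCylinder n f) ≤ (2⁻¹ : ℝ≥0∞) ^ ∑ i, f i := by
  refine ediam_le fun y hy z hz => ?_
  have hyz := abs_sub_le_of_p2dD1_iterate_eq n hy.1 hz.1 fun i hi => by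
    rw [hy.2 ⟨i, hi⟩, hz.2 ⟨i, hi⟩]
  rw [p2dDigitSum_eq_of_mem_p2dCylinder hy] at hyz
  have hpow : (2⁻¹ : ℝ≥0∞) ^ ∑ i, f i = ENNReal.ofReal ((2⁻¹ : ℝ) ^ ∑ i, f i) := by
    rw [ENNReal.ofReal_pow (by norm_num), ENNReal.ofReal_inv_of_pos two_pos, ENNReal.ofReal_ofNat]
  rw [edist_dist, Real.dist_eq, hpow]
  exact ENNReal.ofReal_le_ofReal hyz

def p2dHeavyCylinder (K n : ℕ) (f : Fin n → ℕ) : Set ℝ :=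
  if K * n ≤ ∑ i, f i then p2dCylinder n f else ∅

lemma ediam_p2dHeavyCylinder_le {K : ℕ} (hK : 1 ≤ K) (n : ℕ) (f : Fin n → ℕ) :
    ediam (p2dHeavyCylinder K n f) ≤ (2⁻¹ : ℝ≥0∞) ^ n := by
  unfold p2dHeavyCylinder
  split_ifs with h
  · refine (ediam_p2dCylinder_le n f).trans (pow_le_pow_right_of_le_one' (by norm_num) ?_)
    nlinarith
  · simp

lemma ediam_p2dHeavyCylinder_rpow_le {s : ℝ} (hs : 0 < s) (K n : ℕ) (f : Fin n → ℕ) :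
    ediam (p2dHeavyCylinder K n f) ^ s ≤
      ((2⁻¹ : ℝ≥0∞) ^ (s / 2)) ^ (K * n) * ∏ i, ((2⁻¹ : ℝ≥0∞) ^ (s / 2)) ^ f i := by
  unfold p2dHeavyCylinder
  split_ifs with h
  · rw [Finset.prod_pow_eq_pow_sum, ← pow_add, ← ENNReal.rpow_natCast, ← ENNReal.rpow_mul]
    calc ediam (p2dCylinder n f) ^ s ≤ ((2⁻¹ : ℝ≥0∞) ^ ∑ i, f i) ^ s := by
          gcongr; exact ediam_p2dCylinder_le n f
      _ = (2⁻¹ : ℝ≥0∞) ^ ((∑ i, f i : ℕ) * s) := by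
          rw [← ENNReal.rpow_natCast, ← ENNReal.rpow_mul]
      _ ≤ (2⁻¹ : ℝ≥0∞) ^ (s / 2 * (K * n + ∑ i, f i : ℕ)) := by
          refine ENNReal.rpow_le_rpow_of_exponent_ge (by norm_num) ?_
          have : ((K * n : ℕ) : ℝ) ≤ (∑ i, f i : ℕ) := by exact_mod_cast h
          push_cast at this ⊢
          nlinarith
  · simp [ENNReal.zero_rpow_of_pos hs]

lemma tsum_ediam_p2dHeavyCylinder_rpow_le {s : ℝ} (hs : 0 < s) (K n : ℕ) :
    ∑' f, ediam (p2dHeavyCylinder K n f) ^ s ≤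
      (((2⁻¹ : ℝ≥0∞) ^ (s / 2)) ^ K * (1 - (2⁻¹ : ℝ≥0∞) ^ (s / 2))⁻¹) ^ n := by
  set b : ℝ≥0∞ := (2⁻¹ : ℝ≥0∞) ^ (s / 2)
  calc ∑' f, ediam (p2dHeavyCylinder K n f) ^ s ≤ ∑' f : Fin n → ℕ, b ^ (K * n) * ∏ i, b ^ f i :=
        ENNReal.tsum_le_tsum (ediam_p2dHeavyCylinder_rpow_le hs K n)
    _ = (b ^ K * (1 - b)⁻¹) ^ n := by
        rw [ENNReal.tsum_mul_left, ENNReal.tsum_pi_fin_prod_eq_pow, ENNReal.tsum_geometric,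
          mul_pow, pow_mul]

def p2dFastSet (K N : ℕ) : Set ℝ :=
  {x | x ∈ Ioc 0 1 ∧ ∀ n ≥ N, K * n ≤ p2dDigitSum n x}

lemma p2dFastSet_subset_iUnion_p2dHeavyCylinder {K N n : ℕ} (hn : N ≤ n) :
    p2dFastSet K N ⊆ ⋃ f, p2dHeavyCylinder K n f := by
  intro x hx
  have hcyl : x ∈ p2dCylinder n fun i => p2dD1 (p2dT^[i] x) := ⟨hx.1, fun _ => rfl⟩
  refine mem_iUnion.2 ⟨fun i => p2dD1 (p2dT^[i] x), ?_⟩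
  rw [p2dHeavyCylinder, if_pos (p2dDigitSum_eq_of_mem_p2dCylinder hcyl ▸ hx.2 n hn)]
  exact hcyl

lemma hausdorffMeasure_p2dFastSet_eq_zero {s : ℝ} (hs : 0 < s) {K : ℕ} (hK₁ : 1 ≤ K)
    (hK : ((2⁻¹ : ℝ≥0∞) ^ (s / 2)) ^ K * (1 - (2⁻¹ : ℝ≥0∞) ^ (s / 2))⁻¹ < 1) (N : ℕ) :
    μH[s] (p2dFastSet K N) = 0 := by
  refine le_antisymm ?_ zero_le
  calc μH[s] (p2dFastSet K N)
      ≤ liminf (fun n => ∑' f, ediam (p2dHeavyCylinder K n f) ^ s) atTop :=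
        Measure.hausdorffMeasure_le_liminf_tsum s _ _
          (ENNReal.tendsto_pow_atTop_nhds_zero_of_lt_one (by norm_num)) _
          (.of_forall (ediam_p2dHeavyCylinder_le hK₁))
          ((eventually_ge_atTop N).mono fun _ => p2dFastSet_subset_iUnion_p2dHeavyCylinder)
    _ ≤ liminf (fun n => (((2⁻¹ : ℝ≥0∞) ^ (s / 2)) ^ K * (1 - (2⁻¹ : ℝ≥0∞) ^ (s / 2))⁻¹) ^ n)
          atTop :=
        liminf_le_liminf (.of_forall (tsum_ediam_p2dHeavyCylinder_rpow_le hs K))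
    _ = 0 := (ENNReal.tendsto_pow_atTop_nhds_zero_of_lt_one hK).liminf_eq

lemma exists_hausdorffMeasure_p2dFastSet_eq_zero {s : ℝ} (hs : 0 < s) :
    ∃ K : ℕ, ∀ N, μH[s] (p2dFastSet K N) = 0 := by
  set b : ℝ≥0∞ := (2⁻¹ : ℝ≥0∞) ^ (s / 2)
  have hb : b < 1 := ENNReal.rpow_lt_one (by norm_num) (by positivity)
  have hq : (1 - b)⁻¹ ≠ ∞ := ENNReal.inv_ne_top.2 (tsub_pos_of_lt hb).ne'
  have hlim : Tendsto (fun K : ℕ => b ^ K * (1 - b)⁻¹) atTop (𝓝 0) := by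
    simpa using ENNReal.Tendsto.mul_const (ENNReal.tendsto_pow_atTop_nhds_zero_of_lt_one hb)
      (.inr hq)
  obtain ⟨K, hK, hK₁⟩ := ((hlim.eventually_lt_const zero_lt_one).and (eventually_ge_atTop 1)).exists
  exact ⟨K, hausdorffMeasure_p2dFastSet_eq_zero hs hK₁ hK⟩

/-- for `r ≥ 1` the level set of `Lₙ(x)/nʳ → α` has Hausdorff dimension `0`. -/
theorem p2d_dimH_E_r_alpha (r α : ℝ) (hr : 1 ≤ r) (hα : 0 < α) :
    dimH {x : ℝ | x ∈ Set.Ioc (0:ℝ) 1 ∧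
        Tendsto (fun n : ℕ => (p2dL n x : ℝ) / (n:ℝ) ^ r) atTop (nhds α)} = 0 := by
  refine le_antisymm (dimH_le fun s hs => ?_) zero_le
  by_contra! hs₀
  obtain ⟨K, hK⟩ := exists_hausdorffMeasure_p2dFastSet_eq_zero (s := s) (by exact_mod_cast hs₀)
  have hsub : {x : ℝ | x ∈ Set.Ioc (0:ℝ) 1 ∧
      Tendsto (fun n : ℕ => (p2dL n x : ℝ) / (n:ℝ) ^ r) atTop (nhds α)} ⊆ ⋃ N, p2dFastSet K N :=
    fun x ⟨hx, hlim⟩ => by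
      obtain ⟨N, hN⟩ := eventually_atTop.1 (eventually_mul_le_p2dDigitSum hr hα hlim K)
      exact mem_iUnion.2 ⟨N, hx, fun n hn => by exact_mod_cast hN n hn⟩
  rw [measure_mono_null hsub (measure_iUnion_null hK)] at hs
  exact ENNReal.zero_ne_top hs
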